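/- In a finite discounted MDP, if actions a and a' are ε-bisimilar at every state—meaning |r(h,a) − r(h,a')| ≤ ε and the total variation distance between transition distributions P(·|h,a) and P(·|h,a') is at most ε—then |Q^π(h,a) − Q^π(h,a')| ≤ 2ε/(1−γ) · max(1, V_max) for value functions bounded by V_max; in particular with rewards in [0,1] and V_max = 1/(1−γ), the Q-value gap is O(ε/(1−γ)²). -/

import Mathlib

open Finset

/-!
Subtracting the two Bellman equations leaves the reward gap, at most `ε`, plus `γ` times the gap
between the expectations of `V` under `P(·|h,a)` and `P(·|h,a')`, which is at most
`∑ |P h a s - P h a' s| · ‖V‖_∞ ≤ 2ε · max 1 Vmax`. Finally `ε + γ · 2εM ≤ (1 + γ) · 2εM` and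
`1 + γ ≤ 1 / (1 - γ)`.
-/

theorem abs_add_mul_sub_add_mul_le {γ : ℝ} (hγ : 0 ≤ γ) (x x' y y' : ℝ) :
    |(x + γ * y) - (x' + γ * y')| ≤ |x - x'| + γ * |y - y'| := by
  calc |(x + γ * y) - (x' + γ * y')| = |(x - x') + γ * (y - y')| := by congr 1; ring
    _ ≤ |x - x'| + |γ * (y - y')| := abs_add_le _ _
    _ = |x - x'| + γ * |y - y'| := by rw [abs_mul, abs_of_nonneg hγ]

theorem abs_sum_mul_sub_sum_mul_le {ι : Type*} (t : Finset ι) (p q V : ι → ℝ) {M : ℝ}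
    (hV : ∀ i ∈ t, |V i| ≤ M) :
    |∑ i ∈ t, p i * V i - ∑ i ∈ t, q i * V i| ≤ (∑ i ∈ t, |p i - q i|) * M := by
  rw [← sum_sub_distrib, sum_mul]
  calc |∑ i ∈ t, (p i * V i - q i * V i)| ≤ ∑ i ∈ t, |p i * V i - q i * V i| :=
        abs_sum_le_sum_abs _ _
    _ ≤ ∑ i ∈ t, |p i - q i| * M := by
        refine sum_le_sum fun i hi => ?_
        rw [← sub_mul, abs_mul]
        exact mul_le_mul_of_nonneg_left (hV i hi) (abs_nonneg _)

theorem add_mul_two_mul_le_two_mul_div_one_sub {γ ε M : ℝ} (hγ0 : 0 ≤ γ) (hγ1 : γ < 1)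
    (hε : 0 ≤ ε) (hM : 1 ≤ M) :
    ε + γ * (2 * ε * M) ≤ 2 * ε / (1 - γ) * M := by
  have hεM : ε ≤ 2 * ε * M := by nlinarith
  have hγ : 1 + γ ≤ 1 / (1 - γ) := by
    rw [le_div_iff₀ (by linarith)]
    nlinarith
  calc ε + γ * (2 * ε * M) ≤ (1 + γ) * (2 * ε * M) := by nlinarith
    _ ≤ 1 / (1 - γ) * (2 * ε * M) := by gcongr
    _ = 2 * ε / (1 - γ) * M := by ring

theorem Q_gap_of_bisimilar_general {S Act : Type*} [Fintype S]
    (γ ε Vmax : ℝ) (hγ0 : 0 ≤ γ) (hγ1 : γ < 1)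
    (r : S → Act → ℝ)
    (P : S → Act → S → ℝ)
    (V : S → ℝ) (hV : ∀ s, |V s| ≤ Vmax)
    (Q : S → Act → ℝ)
    (hQ : ∀ h a, Q h a = r h a + γ * ∑ s, P h a s * V s)
    (a a' : Act)
    (hbisim_r : ∀ h, |r h a - r h a'| ≤ ε)
    (hbisim_P : ∀ h, (1 / 2) * ∑ s, |P h a s - P h a' s| ≤ ε) :
    ∀ h, |Q h a - Q h a'| ≤ 2 * ε / (1 - γ) * max 1 Vmax := by
  intro h
  have hε : 0 ≤ ε := (abs_nonneg _).trans (hbisim_r h)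
  have hM : (1 : ℝ) ≤ max 1 Vmax := le_max_left _ _
  have hTV : ∑ s, |P h a s - P h a' s| ≤ 2 * ε := by linarith [hbisim_P h]
  have hexp : |∑ s, P h a s * V s - ∑ s, P h a' s * V s| ≤ 2 * ε * max 1 Vmax :=
    (abs_sum_mul_sub_sum_mul_le _ _ _ _ fun s _ => (hV s).trans (le_max_right _ _)).trans
      (mul_le_mul_of_nonneg_right hTV (zero_le_one.trans hM))
  calc |Q h a - Q h a'|
      ≤ |r h a - r h a'| + γ * |∑ s, P h a s * V s - ∑ s, P h a' s * V s| := by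
        rw [hQ, hQ]
        exact abs_add_mul_sub_add_mul_le hγ0 _ _ _ _
    _ ≤ ε + γ * (2 * ε * max 1 Vmax) := by gcongr; exact hbisim_r h
    _ ≤ 2 * ε / (1 - γ) * max 1 Vmax :=
        add_mul_two_mul_le_two_mul_div_one_sub hγ0 hγ1 hε hM

/-- In a finite discounted MDP, if actions `a` and `a'` are ε-bisimilar at every
state—meaning `|r(h,a) − r(h,a')| ≤ ε` and the total variation distance between
`P(·|h,a)` and `P(·|h,a')` is at most `ε`—then
`|Q^π(h,a) − Q^π(h,a')| ≤ 2ε/(1−γ) · max(1, Vmax)` for value functions bounded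
by `Vmax`. -/
theorem Q_gap_of_bisimilar {S Act : Type*} [Fintype S]
    (γ ε Vmax : ℝ) (hγ0 : 0 ≤ γ) (hγ1 : γ < 1) (hε : 0 ≤ ε)
    (r : S → Act → ℝ) (hr : ∀ h a, r h a ∈ Set.Icc (0 : ℝ) 1)
    (P : S → Act → S → ℝ)
    (hP0 : ∀ h a s, 0 ≤ P h a s) (hP1 : ∀ h a, ∑ s, P h a s = 1)
    (V : S → ℝ) (hV : ∀ s, |V s| ≤ Vmax)
    (Q : S → Act → ℝ)
    (hQ : ∀ h a, Q h a = r h a + γ * ∑ s, P h a s * V s)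
    (a a' : Act)
    (hbisim_r : ∀ h, |r h a - r h a'| ≤ ε)
    (hbisim_P : ∀ h, (1 / 2) * ∑ s, |P h a s - P h a' s| ≤ ε) :
    ∀ h, |Q h a - Q h a'| ≤ 2 * ε / (1 - γ) * max 1 Vmax :=
  Q_gap_of_bisimilar_general γ ε Vmax hγ0 hγ1 r P V hV Q hQ a a' hbisim_r hbisim_P
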